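/- Let G and H be finite graphs, each of which is a general corona of a tree, say G = T₁∘𝒫₁ and H = T₂∘𝒫₂ for trees T₁, T₂ and vertex neighborhood partitions 𝒫₁, 𝒫₂. If G and H share exactly one edge (and exactly its two endpoints), and exactly one endpoint of this edge is an external vertex in each of G and H, then the union G ∪ H is a general corona of a tree. -/

import Mathlib

/-!
Write `G = T₁ ∘ 𝒫₁` and `H = T₂ ∘ 𝒫₂`. The shared edge joins an external vertex `(vᵢ, 1)` to one
of its neighbours, necessarily an internal vertex `(vᵢ, Aᵢ)`. Glue `T₁` and `T₂` into a tree `T` by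
identifying `v₁` with `v₂`, and partition neighbourhoods in `T` as `𝒫₁` and `𝒫₂` do, except that
at the glued vertex the parts `A₁` and `A₂` are merged into one. Both coronas embed into `T ∘ 𝒫`,
they meet exactly in the images of the shared edge, and no edge of `T ∘ 𝒫` joins the rest of one
to the rest of the other; hence `G ∪ H ≅ T ∘ 𝒫`.
-/

open SimpleGraph

namespace GenCorona

universe u

/-- A vertex neighborhood partition of a graph `G`: for every vertex `v`, a partition
of the open neighborhood `N_G(v)` into nonempty sets. -/
structure NbhdPartition {V : Type u} (G : SimpleGraph V) where
  part : V → Set (Set V)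
  nonempty : ∀ v : V, ∀ A ∈ part v, A.Nonempty
  subset_nbhd : ∀ v : V, ∀ A ∈ part v, A ⊆ G.neighborSet v
  covers : ∀ v : V, ∀ u ∈ G.neighborSet v, ∃ A ∈ part v, u ∈ A
  eq_of_inter : ∀ v : V, ∀ A ∈ part v, ∀ B ∈ part v, (A ∩ B).Nonempty → A = B

variable {V : Type u}

/-- The vertex type of the general corona `G ∘ 𝒫`: external vertices `(v,1)` are encoded
as `Sum.inl v`, internal vertices `(v,A)` (with `A ∈ 𝒫(v)`) as `Sum.inr ⟨(v,A), _⟩`. -/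
abbrev CoronaVert (G : SimpleGraph V) (P : NbhdPartition G) : Type u :=
  V ⊕ {p : V × Set V // p.2 ∈ P.part p.1}

/-- The general corona `G ∘ 𝒫`. -/
def corona (G : SimpleGraph V) (P : NbhdPartition G) : SimpleGraph (CoronaVert G P) :=
  SimpleGraph.fromRel fun x y =>
    match x, y with
    | Sum.inl v, Sum.inr p => v = p.val.1
    | Sum.inr p, Sum.inr q =>
        G.Adj p.val.1 q.val.1 ∧ q.val.1 ∈ p.val.2 ∧ p.val.1 ∈ q.val.2
    | _, _ => False

/-- The set of external vertices of the general corona. -/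
def Ext (G : SimpleGraph V) (P : NbhdPartition G) : Set (CoronaVert G P) :=
  Set.range Sum.inl

/-- A graph is a general corona of a tree if it is isomorphic to `T ∘ 𝒫` for some finite
tree `T` and some vertex neighborhood partition `𝒫` of `T`. -/
def IsGeneralCoronaOfTree {W : Type*} (H : SimpleGraph W) : Prop :=
  ∃ (n : ℕ) (T : SimpleGraph (Fin n)) (P : NbhdPartition T),
    T.IsTree ∧ Nonempty (H ≃g corona T P)

/-- A graph `H` is a general corona of a tree with external vertex set `E`. -/
def IsGenCoronaWithExt {W : Type*} (H : SimpleGraph W) (E : Set W) : Prop :=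
  ∃ (n : ℕ) (T : SimpleGraph (Fin n)) (P : NbhdPartition T),
    T.IsTree ∧ ∃ f : H ≃g corona T P, E = ⇑f ⁻¹' Ext T P

/-- `D` is a dominating set of `G`. -/
def IsDominating (G : SimpleGraph V) (D : Set V) : Prop :=
  ∀ v ∉ D, ∃ u ∈ D, G.Adj v u

/-- `S` is a 2-packing of `G`: any two distinct vertices of `S` are at distance
greater than 2 (where the extended distance of unreachable vertices is `⊤`). -/
def Is2Packing (G : SimpleGraph V) (S : Set V) : Prop :=
  ∀ u ∈ S, ∀ v ∈ S, u ≠ v → 2 < G.edist u v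

/-- A leaf is a vertex of degree 1, i.e. with exactly one neighbor. -/
def IsLeaf (G : SimpleGraph V) (v : V) : Prop :=
  (G.neighborSet v).ncard = 1

/-- The domination number: the minimum size of a dominating set. -/
noncomputable def dominationNumber (G : SimpleGraph V) : ℕ :=
  sInf {n : ℕ | ∃ D : Set V, IsDominating G D ∧ D.ncard = n}

/-- The graph obtained from `G` by subdividing every edge in `F` (each once):
for each `e ∈ F` a new vertex `Sum.inr e` replaces the edge `e` by a path of length two. -/
def subdivide (G : SimpleGraph V) (F : Set (Sym2 V)) : SimpleGraph (V ⊕ F) :=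
  SimpleGraph.fromRel fun x y =>
    match x, y with
    | Sum.inl u, Sum.inl v => G.Adj u v ∧ s(u, v) ∉ F
    | Sum.inl u, Sum.inr e => u ∈ e.val
    | _, _ => False

/-- The domination subdivision number `sd(G)`: the minimum number of edges which must be
subdivided (each edge at most once) in order to increase the domination number. -/
noncomputable def sd (G : SimpleGraph V) : ℕ :=
  sInf {k : ℕ | ∃ F : Set (Sym2 V), F ⊆ G.edgeSet ∧ F.ncard = k ∧
    dominationNumber G < dominationNumber (subdivide G F)}

/-- The corona `G ∘ K₁`: attach one new pendant vertex `Sum.inr v` to each vertex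
`Sum.inl v` of `G`. -/
def coronaK1 (G : SimpleGraph V) : SimpleGraph (V ⊕ V) :=
  SimpleGraph.fromRel fun x y =>
    match x, y with
    | Sum.inl u, Sum.inl w => G.Adj u w
    | Sum.inl u, Sum.inr w => u = w
    | _, _ => False

/-- The 2-subdivision `S₂(G)`: every edge `uv` is replaced by a path `(u, x₁, x₂, v)`;
the new vertex `Sum.inr ⟨(u,v), _⟩` is the subdivision vertex adjacent to `u`. -/
def twoSubdivision (G : SimpleGraph V) : SimpleGraph (V ⊕ {p : V × V // G.Adj p.1 p.2}) :=
  SimpleGraph.fromRel fun x y =>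
    match x, y with
    | Sum.inl u, Sum.inr p => u = p.val.1
    | Sum.inr p, Sum.inr q => p.val.1 = q.val.2 ∧ p.val.2 = q.val.1
    | _, _ => False

/-- `𝒫'` is a refinement of `𝒫`. -/
def Refines {G : SimpleGraph V} (P' P : NbhdPartition G) : Prop :=
  ∀ v : V, ∀ A ∈ P'.part v, ∃ B ∈ P.part v, A ⊆ B

/-- The graph obtained by contracting the two vertices `x` and `y` of `G` to the single
vertex `x` (the vertex `y` is removed, and `x` becomes adjacent to all former
neighbors of `y`). -/
def contractPair {W : Type*} (G : SimpleGraph W) (x y : W) :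
    SimpleGraph {w : W // w ≠ y} :=
  SimpleGraph.fromRel fun a b =>
    G.Adj a.val b.val ∨ (a.val = x ∧ G.Adj y b.val) ∨ (b.val = x ∧ G.Adj a.val y)

/-- The graph obtained from `G` by attaching a path `(x, y, z)` (encoded as
`Sum.inr 0, Sum.inr 1, Sum.inr 2`) to the vertex `v` via the edge `v x`. -/
def attachPath3 {W : Type*} (G : SimpleGraph W) (v : W) : SimpleGraph (W ⊕ Fin 3) :=
  SimpleGraph.fromRel fun a b =>
    match a, b with
    | Sum.inl u, Sum.inl w => G.Adj u w
    | Sum.inl u, Sum.inr i => u = v ∧ i = 0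
    | Sum.inr i, Sum.inr j => (i = 0 ∧ j = 1) ∨ (i = 1 ∧ j = 2)
    | _, _ => False

/-- The graph obtained from `G` by attaching a path `(x, y)` (encoded as
`Sum.inr 0, Sum.inr 1`) to the vertex `v` via the edge `v x`. -/
def attachPath2 {W : Type*} (G : SimpleGraph W) (v : W) : SimpleGraph (W ⊕ Fin 2) :=
  SimpleGraph.fromRel fun a b =>
    match a, b with
    | Sum.inl u, Sum.inl w => G.Adj u w
    | Sum.inl u, Sum.inr i => u = v ∧ i = 0
    | Sum.inr i, Sum.inr j => i = 0 ∧ j = 1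
    | _, _ => False

/-- The family `𝓕` of labeled trees; the label of a vertex is `A` when it belongs to the
distinguished set `L`, and `B` otherwise.  The family contains the labeled path `P₄`
(leaves labeled `A`, support vertices labeled `B`) and is closed under the two
attachment operations. -/
inductive LabF : ∀ {W : Type}, SimpleGraph W → Set W → Prop where
  | base : LabF (SimpleGraph.pathGraph 4) ({0, 3} : Set (Fin 4))
  | opA {W : Type} {G : SimpleGraph W} {L : Set W} (v : W) :
      LabF G L → v ∈ L →
        LabF (attachPath3 G v) (Sum.inl '' L ∪ {Sum.inr (2 : Fin 3)})
  | opB {W : Type} {G : SimpleGraph W} {L : Set W} (v : W) :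
      LabF G L → v ∉ L →
        LabF (attachPath2 G v) (Sum.inl '' L ∪ {Sum.inr (1 : Fin 2)})

/-- A tree `T` belongs to the family `𝓕` if it admits a labeling constructed by the
above rules, i.e. it is isomorphic to a member of the inductively generated family. -/
def MemF {W : Type*} (T : SimpleGraph W) : Prop :=
  ∃ (W' : Type) (G : SimpleGraph W') (L : Set W'), LabF G L ∧ Nonempty (T ≃g G)

section Corona

variable {G : SimpleGraph V} {P : NbhdPartition G}

lemma NbhdPartition.self_notMem {v : V} {A : Set V} (hA : A ∈ P.part v) : v ∉ A :=
  fun h => G.irrefl (P.subset_nbhd v A hA h)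

@[simp] lemma corona_adj_inl_inl {v w : V} :
    ¬ (corona G P).Adj (Sum.inl v) (Sum.inl w) := by
  simp [corona]

@[simp] lemma corona_adj_inl_inr {v : V} {p} :
    (corona G P).Adj (Sum.inl v) (Sum.inr p) ↔ v = p.val.1 := by
  simp [corona]

@[simp] lemma corona_adj_inr_inl {v : V} {p} :
    (corona G P).Adj (Sum.inr p) (Sum.inl v) ↔ v = p.val.1 := by
  rw [adj_comm, corona_adj_inl_inr]

@[simp] lemma corona_adj_inr_inr {p q} :
    (corona G P).Adj (Sum.inr p : CoronaVert G P) (Sum.inr q) ↔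
      G.Adj p.val.1 q.val.1 ∧ q.val.1 ∈ p.val.2 ∧ p.val.1 ∈ q.val.2 := by
  simp only [corona, fromRel_adj, ne_eq, Sum.inr.injEq]
  constructor
  · rintro ⟨-, h | ⟨h, hq, hp⟩⟩
    exacts [h, ⟨h.symm, hp, hq⟩]
  · intro h
    exact ⟨fun hpq => h.1.ne (by rw [hpq]), Or.inl h⟩

lemma exists_eq_inl_inr_of_adj {c d : CoronaVert G P} (hc : c ∈ Ext G P)
    (hcd : (corona G P).Adj c d) :
    ∃ v A, ∃ hA : A ∈ P.part v, c = Sum.inl v ∧ d = Sum.inr ⟨(v, A), hA⟩ := by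
  obtain ⟨v, rfl⟩ := hc
  rcases d with w | ⟨⟨w, A⟩, hA⟩
  · exact absurd hcd corona_adj_inl_inl
  · obtain rfl : v = w := corona_adj_inl_inr.mp hcd
    exact ⟨v, A, hA, rfl, rfl⟩

end Corona

section CoronaEmbedding

variable {V' : Type*} {G : SimpleGraph V} {P : NbhdPartition G}
  {G' : SimpleGraph V'} {P' : NbhdPartition G'}

def coronaEmbedding (f : V ↪ V') (ψ : V → Set V → Set V')
    (hψ : ∀ x A, A ∈ P.part x → ψ x A ∈ P'.part (f x))
    (hadj : ∀ x y, G'.Adj (f x) (f y) ↔ G.Adj x y)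
    (hpre : ∀ x A, A ∈ P.part x → f ⁻¹' ψ x A = A) :
    corona G P ↪g corona G' P' where
  toFun := Sum.map f fun p => ⟨(f p.1.1, ψ p.1.1 p.1.2), hψ _ _ p.2⟩
  inj' := by
    refine f.injective.sumMap ?_
    rintro ⟨⟨x, A⟩, hA⟩ ⟨⟨y, B⟩, hB⟩ h
    simp only [Subtype.mk.injEq, Prod.mk.injEq] at h
    obtain ⟨hxy, hAB⟩ := h
    obtain rfl := f.injective hxy
    obtain rfl : A = B := by rw [← hpre x A hA, ← hpre x B hB, hAB]
    rfl
  map_rel_iff' := by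
    rintro (x | ⟨⟨x, A⟩, hA⟩) (y | ⟨⟨y, B⟩, hB⟩) <;>
      simp only [Function.Embedding.coeFn_mk, Sum.map_inl, Sum.map_inr, corona_adj_inl_inl,
        corona_adj_inl_inr, corona_adj_inr_inl, corona_adj_inr_inr, f.injective.eq_iff]
    rw [hadj, ← Set.mem_preimage, hpre x A hA, ← Set.mem_preimage (f := f), hpre y B hB]

end CoronaEmbedding

lemma _root_.SimpleGraph.Reachable.map_of_adj {X Y : Type*} {G : SimpleGraph X} {H : SimpleGraph Y}
    (r : X → Y) (h : ∀ a b, G.Adj a b → H.Reachable (r a) (r b)) {a b : X}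
    (hab : G.Reachable a b) : H.Reachable (r a) (r b) := by
  obtain ⟨p⟩ := hab
  induction p with
  | nil => rfl
  | cons hadj _ ih => exact (h _ _ hadj).trans ih

lemma isBridge_map_sup {X : Type*} {T : SimpleGraph V} {H : SimpleGraph X} (f : V ↪ X)
    (r : X → V) (hr : ∀ x, r (f x) = x) (hH : ∀ a b, H.Adj a b → r a = r b)
    (hT : T.IsAcyclic) {x y : V} (hxy : T.Adj x y) :
    (T.map f ⊔ H).IsBridge s(f x, f y) := by
  rw [isBridge_iff]
  intro hreach
  have hlift := Reachable.map_of_adj (H := T.deleteEdges {s(x, y)}) r ?_ hreach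
  · rw [hr, hr] at hlift
    exact isBridge_iff.mp (isAcyclic_iff_forall_adj_isBridge.mp hT hxy) hlift
  · intro a b hab
    rw [deleteEdges_adj, sup_adj, map_adj] at hab
    rcases hab with ⟨⟨x', y', hxy', rfl, rfl⟩ | hab, hne⟩
    · refine Adj.reachable ((deleteEdges_adj ..).mpr ⟨by rwa [hr, hr], ?_⟩)
      rw [hr, hr, Set.mem_singleton_iff]
      intro h
      exact hne (by rw [Set.mem_singleton_iff, ← Sym2.map_mk, h, Sym2.map_mk])
    · rw [hH a b hab]

section Wedge

variable {V₁ V₂ X : Type*}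

/-- `f₁` and `f₂` present `X` as the one-point union of `V₁` and `V₂` with `v₁` glued to `v₂`. -/
structure IsWedge (f₁ : V₁ ↪ X) (f₂ : V₂ ↪ X) (v₁ : V₁) (v₂ : V₂) : Prop where
  apply_eq_apply_iff : ∀ x y, f₁ x = f₂ y ↔ x = v₁ ∧ y = v₂
  mem_range_or : ∀ z, z ∈ Set.range f₁ ∨ z ∈ Set.range f₂

variable {f₁ : V₁ ↪ X} {f₂ : V₂ ↪ X} {v₁ : V₁} {v₂ : V₂}

lemma IsWedge.symm (hw : IsWedge f₁ f₂ v₁ v₂) : IsWedge f₂ f₁ v₂ v₁ where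
  apply_eq_apply_iff y x := by rw [eq_comm, hw.apply_eq_apply_iff, and_comm]
  mem_range_or z := (hw.mem_range_or z).symm

lemma IsWedge.apply_eq (hw : IsWedge f₁ f₂ v₁ v₂) : f₁ v₁ = f₂ v₂ :=
  (hw.apply_eq_apply_iff v₁ v₂).mpr ⟨rfl, rfl⟩

lemma exists_isWedge_fin [Fintype V₁] [Fintype V₂] (v₁ : V₁) (v₂ : V₂) :
    ∃ (n : ℕ) (f₁ : V₁ ↪ Fin n) (f₂ : V₂ ↪ Fin n), IsWedge f₁ f₂ v₁ v₂ := by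
  classical
  let e := Fintype.equivFin (V₁ ⊕ {y : V₂ // y ≠ v₂})
  let g : V₂ → V₁ ⊕ {y : V₂ // y ≠ v₂} := fun y => if h : y = v₂ then .inl v₁ else .inr ⟨y, h⟩
  have hg : ∀ x y, Sum.inl x = g y ↔ x = v₁ ∧ y = v₂ := by
    intro x y
    by_cases hy : y = v₂ <;> simp [g, hy]
  have g_inj : g.Injective := by
    intro y y' h
    by_cases hy : y = v₂ <;> by_cases hy' : y' = v₂ <;> simp_all [g]
  refine ⟨_, ⟨e ∘ Sum.inl, e.injective.comp Sum.inl_injective⟩,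
    ⟨e ∘ g, e.injective.comp g_inj⟩, ⟨fun x y => ?_, fun z => ?_⟩⟩
  · simpa only [Function.Embedding.coeFn_mk, Function.comp_apply, e.apply_eq_iff_eq] using hg x y
  · rcases h : e.symm z with x | ⟨y, hy⟩
    · exact Or.inl ⟨x, by simp [← h]⟩
    · exact Or.inr ⟨y, by simp [g, hy, ← h]⟩

lemma IsWedge.exists_retraction (hw : IsWedge f₁ f₂ v₁ v₂) :
    ∃ r : X → V₁, (∀ x, r (f₁ x) = x) ∧ ∀ y, r (f₂ y) = v₁ := by
  classical
  have : Nonempty V₁ := ⟨v₁⟩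
  refine ⟨fun z => if z ∈ Set.range f₂ then v₁ else Function.invFun f₁ z, fun x => ?_,
    fun y => if_pos ⟨y, rfl⟩⟩
  dsimp only
  split_ifs with h
  · obtain ⟨y, hy⟩ := h
    exact ((hw.apply_eq_apply_iff x y).mp hy.symm).1.symm
  · exact Function.leftInverse_invFun f₁.injective x

lemma IsWedge.isTree_sup {T₁ : SimpleGraph V₁} {T₂ : SimpleGraph V₂}
    (hw : IsWedge f₁ f₂ v₁ v₂) (h₁ : T₁.IsTree) (h₂ : T₂.IsTree) :
    (T₁.map f₁ ⊔ T₂.map f₂).IsTree := by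
  refine ⟨(connected_iff_exists_forall_reachable _).mpr ⟨f₁ v₁, ?_⟩, ?_⟩
  · intro z
    rcases hw.mem_range_or z with ⟨x, rfl⟩ | ⟨y, rfl⟩
    · exact (h₁.connected v₁ x).map ((Hom.ofLE le_sup_left).comp (Embedding.map f₁ T₁).toHom)
    · rw [hw.apply_eq]
      exact (h₂.connected v₂ y).map ((Hom.ofLE le_sup_right).comp (Embedding.map f₂ T₂).toHom)
  · -- Collapsing the other side onto the glued vertex turns a detour around an edge of `Tᵢ`
    -- into one inside `Tᵢ`.
    rw [isAcyclic_iff_forall_adj_isBridge]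
    intro a b hab
    rw [sup_adj, map_adj, map_adj] at hab
    rcases hab with ⟨x, y, hxy, rfl, rfl⟩ | ⟨x, y, hxy, rfl, rfl⟩
    · obtain ⟨r, hr, hr₂⟩ := hw.exists_retraction
      refine isBridge_map_sup f₁ r hr ?_ h₁.isAcyclic hxy
      intro a b hab
      obtain ⟨y, y', -, rfl, rfl⟩ := (map_adj _ _ _ _).mp hab
      rw [hr₂, hr₂]
    · obtain ⟨r, hr, hr₁⟩ := hw.symm.exists_retraction
      rw [sup_comm]
      refine isBridge_map_sup f₂ r hr ?_ h₂.isAcyclic hxy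
      intro a b hab
      obtain ⟨x, x', -, rfl, rfl⟩ := (map_adj _ _ _ _).mp hab
      rw [hr₁, hr₁]

end Wedge

section WedgePartition

variable {V₁ V₂ X : Type*} {f₁ : V₁ ↪ X} {f₂ : V₂ ↪ X} {v₁ : V₁} {v₂ : V₂}
  {T₁ : SimpleGraph V₁} {T₂ : SimpleGraph V₂} {P₁ : NbhdPartition T₁} {P₂ : NbhdPartition T₂}
  {A₁ A : Set V₁} {A₂ : Set V₂} {x : V₁}

/-- The part of the glued partition coming from `A ∈ 𝒫₁(x)`: its image, except that
`A₁ ∈ 𝒫₁(v₁)` absorbs `A₂ ∈ 𝒫₂(v₂)`. -/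
def wedgePart (f₁ : V₁ ↪ X) (f₂ : V₂ ↪ X) (v₁ : V₁) (A₁ : Set V₁) (A₂ : Set V₂) (x : V₁)
    (A : Set V₁) : Set X :=
  {z | z ∈ f₁ '' A ∨ (x = v₁ ∧ A = A₁ ∧ z ∈ f₂ '' A₂)}

lemma image_subset_wedgePart : f₁ '' A ⊆ wedgePart f₁ f₂ v₁ A₁ A₂ x A :=
  fun _ => Or.inl

lemma wedgePart_self_comm :
    wedgePart f₁ f₂ v₁ A₁ A₂ v₁ A₁ = wedgePart f₂ f₁ v₂ A₂ A₁ v₂ A₂ := by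
  ext z
  simp only [wedgePart, true_and]
  exact or_comm

lemma IsWedge.eq_or_of_apply_mem_wedgePart (hw : IsWedge f₁ f₂ v₁ v₂) {y : V₂}
    (h : f₂ y ∈ wedgePart f₁ f₂ v₁ A₁ A₂ x A) : y = v₂ ∨ (x = v₁ ∧ A = A₁) := by
  rcases h with ⟨a, -, ha⟩ | ⟨hx, hA, -⟩
  exacts [Or.inl ((hw.apply_eq_apply_iff a y).mp ha).2, Or.inr ⟨hx, hA⟩]

lemma IsWedge.preimage_wedgePart (hw : IsWedge f₁ f₂ v₁ v₂) (hA₂ : A₂ ∈ P₂.part v₂) :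
    f₁ ⁻¹' wedgePart f₁ f₂ v₁ A₁ A₂ x A = A := by
  ext a
  refine ⟨?_, fun ha => Or.inl ⟨a, ha, rfl⟩⟩
  rintro (⟨a', ha', hfa⟩ | ⟨-, -, b, hb, hfb⟩)
  · rwa [← f₁.injective hfa]
  · obtain rfl := ((hw.apply_eq_apply_iff a b).mp hfb.symm).2
    exact absurd hb (P₂.self_notMem hA₂)

lemma IsWedge.sup_map_adj_left (hw : IsWedge f₁ f₂ v₁ v₂) {x y : V₁} :
    (T₁.map f₁ ⊔ T₂.map f₂).Adj (f₁ x) (f₁ y) ↔ T₁.Adj x y := by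
  simp only [sup_adj, map_adj, f₁.injective.eq_iff, exists_eq_right_right, exists_eq_right,
    or_iff_left_iff_imp]
  rintro ⟨a, b, hab, hax, hby⟩
  rw [((hw.apply_eq_apply_iff x a).mp hax.symm).2, ((hw.apply_eq_apply_iff y b).mp hby.symm).2]
    at hab
  exact absurd hab (T₂.irrefl)

lemma IsWedge.wedgePart_subset_neighborSet (hw : IsWedge f₁ f₂ v₁ v₂) (hA₂ : A₂ ∈ P₂.part v₂)
    (hA : A ∈ P₁.part x) :
    wedgePart f₁ f₂ v₁ A₁ A₂ x A ⊆ (T₁.map f₁ ⊔ T₂.map f₂).neighborSet (f₁ x) := by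
  rintro _ (⟨a, ha, rfl⟩ | ⟨rfl, -, b, hb, rfl⟩)
  · exact Or.inl ((map_adj _ _ _ _).mpr ⟨x, a, P₁.subset_nbhd x A hA ha, rfl, rfl⟩)
  · exact Or.inr ((map_adj _ _ _ _).mpr
      ⟨v₂, b, P₂.subset_nbhd v₂ A₂ hA₂ hb, hw.apply_eq.symm, rfl⟩)

lemma IsWedge.eq_of_wedgePart_inter (hw : IsWedge f₁ f₂ v₁ v₂) (hA₂ : A₂ ∈ P₂.part v₂)
    {A' : Set V₁} (hA : A ∈ P₁.part x) (hA' : A' ∈ P₁.part x)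
    (h : (wedgePart f₁ f₂ v₁ A₁ A₂ x A ∩ wedgePart f₁ f₂ v₁ A₁ A₂ x A').Nonempty) : A = A' := by
  obtain ⟨_, (⟨a, ha, rfl⟩ | ⟨-, rfl, b, hb, rfl⟩), hc'⟩ := h
  · rw [← Set.mem_preimage, hw.preimage_wedgePart hA₂] at hc'
    exact P₁.eq_of_inter x A hA A' hA' ⟨a, ha, hc'⟩
  · rcases hw.eq_or_of_apply_mem_wedgePart hc' with rfl | ⟨-, rfl⟩
    exacts [absurd hb (P₂.self_notMem hA₂), rfl]

lemma IsWedge.eq_of_wedgePart_inter_wedgePart (hw : IsWedge f₁ f₂ v₁ v₂)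
    (hA₁ : A₁ ∈ P₁.part v₁) (hA₂ : A₂ ∈ P₂.part v₂) {B : Set V₂}
    (hA : A ∈ P₁.part v₁) (hB : B ∈ P₂.part v₂)
    (h : (wedgePart f₁ f₂ v₁ A₁ A₂ v₁ A ∩ wedgePart f₂ f₁ v₂ A₂ A₁ v₂ B).Nonempty) :
    A = A₁ ∧ B = A₂ := by
  have hmerged : A = A₁ ∨ B = A₂ := by
    obtain ⟨_, (⟨a, ha, rfl⟩ | ⟨-, hAA, -⟩), hc'⟩ := h
    · rcases hw.symm.eq_or_of_apply_mem_wedgePart hc' with rfl | ⟨-, hBB⟩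
      exacts [absurd ha (P₁.self_notMem hA), Or.inr hBB]
    · exact Or.inl hAA
  rcases hmerged with rfl | rfl
  · rw [wedgePart_self_comm] at h
    exact ⟨rfl, (hw.symm.eq_of_wedgePart_inter hA hA₂ hB h).symm⟩
  · rw [← wedgePart_self_comm] at h
    exact ⟨hw.eq_of_wedgePart_inter hB hA hA₁ h, rfl⟩

def wedgePartition (hw : IsWedge f₁ f₂ v₁ v₂) (hA₁ : A₁ ∈ P₁.part v₁) (hA₂ : A₂ ∈ P₂.part v₂) :
    NbhdPartition (T₁.map f₁ ⊔ T₂.map f₂) where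
  part z := {S | (∃ x A, A ∈ P₁.part x ∧ f₁ x = z ∧ wedgePart f₁ f₂ v₁ A₁ A₂ x A = S) ∨
    (∃ y B, B ∈ P₂.part y ∧ f₂ y = z ∧ wedgePart f₂ f₁ v₂ A₂ A₁ y B = S)}
  nonempty := by
    rintro z S (⟨x, A, hA, -, rfl⟩ | ⟨y, B, hB, -, rfl⟩)
    · exact ((P₁.nonempty x A hA).image f₁).mono image_subset_wedgePart
    · exact ((P₂.nonempty y B hB).image f₂).mono image_subset_wedgePart
  subset_nbhd := by
    rintro z S (⟨x, A, hA, rfl, rfl⟩ | ⟨y, B, hB, rfl, rfl⟩)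
    · exact hw.wedgePart_subset_neighborSet hA₂ hA
    · rw [sup_comm]
      exact hw.symm.wedgePart_subset_neighborSet hA₁ hB
  covers := by
    intro z c hzc
    rw [mem_neighborSet, sup_adj, map_adj, map_adj] at hzc
    rcases hzc with ⟨x, y, hxy, rfl, rfl⟩ | ⟨x, y, hxy, rfl, rfl⟩
    · obtain ⟨A, hA, hyA⟩ := P₁.covers x y hxy
      exact ⟨_, Or.inl ⟨x, A, hA, rfl, rfl⟩, image_subset_wedgePart ⟨y, hyA, rfl⟩⟩
    · obtain ⟨B, hB, hyB⟩ := P₂.covers x y hxy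
      exact ⟨_, Or.inr ⟨x, B, hB, rfl, rfl⟩, image_subset_wedgePart ⟨y, hyB, rfl⟩⟩
  eq_of_inter := by
    rintro z S (⟨x, A, hA, rfl, rfl⟩ | ⟨y, B, hB, hyz, rfl⟩) S'
      (⟨x', A', hA', hx', rfl⟩ | ⟨y', B', hB', hy', rfl⟩) h
    · obtain rfl := f₁.injective hx'
      rw [hw.eq_of_wedgePart_inter hA₂ hA hA' h]
    · obtain ⟨rfl, rfl⟩ := (hw.apply_eq_apply_iff x y').mp hy'.symm
      obtain ⟨rfl, rfl⟩ := hw.eq_of_wedgePart_inter_wedgePart hA₁ hA₂ hA hB' h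
      exact wedgePart_self_comm
    · obtain ⟨rfl, rfl⟩ := (hw.apply_eq_apply_iff x' y).mp (hx'.trans hyz.symm)
      obtain ⟨rfl, rfl⟩ :=
        hw.eq_of_wedgePart_inter_wedgePart hA₁ hA₂ hA' hB (Set.inter_comm _ _ ▸ h)
      exact wedgePart_self_comm.symm
    · obtain rfl := f₂.injective (hy'.trans hyz.symm)
      rw [hw.symm.eq_of_wedgePart_inter hA₁ hB hB' h]

end WedgePartition

section WedgeCorona

variable {V₁ V₂ X : Type*} {f₁ : V₁ ↪ X} {f₂ : V₂ ↪ X} {v₁ : V₁} {v₂ : V₂}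
  {T₁ : SimpleGraph V₁} {T₂ : SimpleGraph V₂} {P₁ : NbhdPartition T₁} {P₂ : NbhdPartition T₂}
  {A₁ : Set V₁} {A₂ : Set V₂}

def wedgeCoronaLeft (hw : IsWedge f₁ f₂ v₁ v₂) (hA₁ : A₁ ∈ P₁.part v₁)
    (hA₂ : A₂ ∈ P₂.part v₂) :
    corona T₁ P₁ ↪g corona (T₁.map f₁ ⊔ T₂.map f₂) (wedgePartition hw hA₁ hA₂) :=
  coronaEmbedding f₁ (wedgePart f₁ f₂ v₁ A₁ A₂) (fun x A hA => Or.inl ⟨x, A, hA, rfl, rfl⟩)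
    (fun _ _ => hw.sup_map_adj_left) (fun _ _ _ => hw.preimage_wedgePart hA₂)

def wedgeCoronaRight (hw : IsWedge f₁ f₂ v₁ v₂) (hA₁ : A₁ ∈ P₁.part v₁)
    (hA₂ : A₂ ∈ P₂.part v₂) :
    corona T₂ P₂ ↪g corona (T₁.map f₁ ⊔ T₂.map f₂) (wedgePartition hw hA₁ hA₂) :=
  coronaEmbedding f₂ (wedgePart f₂ f₁ v₂ A₂ A₁) (fun y B hB => Or.inr ⟨y, B, hB, rfl, rfl⟩)
    (fun _ _ => by rw [sup_comm]; exact hw.symm.sup_map_adj_left)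
    (fun _ _ _ => hw.symm.preimage_wedgePart hA₁)

variable (hw : IsWedge f₁ f₂ v₁ v₂) (hA₁ : A₁ ∈ P₁.part v₁) (hA₂ : A₂ ∈ P₂.part v₂)

@[simp] lemma wedgeCoronaLeft_inl (x : V₁) :
    wedgeCoronaLeft hw hA₁ hA₂ (Sum.inl x) = Sum.inl (f₁ x) := rfl

@[simp] lemma wedgeCoronaLeft_inr (p : {p : V₁ × Set V₁ // p.2 ∈ P₁.part p.1}) :
    wedgeCoronaLeft hw hA₁ hA₂ (Sum.inr p) =
      Sum.inr ⟨(f₁ p.1.1, wedgePart f₁ f₂ v₁ A₁ A₂ p.1.1 p.1.2), Or.inl ⟨_, _, p.2, rfl, rfl⟩⟩ :=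
  rfl

@[simp] lemma wedgeCoronaRight_inl (y : V₂) :
    wedgeCoronaRight hw hA₁ hA₂ (Sum.inl y) = Sum.inl (f₂ y) := rfl

@[simp] lemma wedgeCoronaRight_inr (p : {p : V₂ × Set V₂ // p.2 ∈ P₂.part p.1}) :
    wedgeCoronaRight hw hA₁ hA₂ (Sum.inr p) =
      Sum.inr ⟨(f₂ p.1.1, wedgePart f₂ f₁ v₂ A₂ A₁ p.1.1 p.1.2), Or.inr ⟨_, _, p.2, rfl, rfl⟩⟩ :=
  rfl

lemma wedgeCoronaLeft_inl_eq :
    wedgeCoronaLeft hw hA₁ hA₂ (Sum.inl v₁) = wedgeCoronaRight hw hA₁ hA₂ (Sum.inl v₂) :=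
  congrArg Sum.inl hw.apply_eq

lemma wedgeCoronaLeft_inr_eq :
    wedgeCoronaLeft hw hA₁ hA₂ (Sum.inr ⟨(v₁, A₁), hA₁⟩) =
      wedgeCoronaRight hw hA₁ hA₂ (Sum.inr ⟨(v₂, A₂), hA₂⟩) :=
  congrArg Sum.inr (Subtype.ext (Prod.ext hw.apply_eq wedgePart_self_comm))

lemma wedgeCorona_mem_range_or (c : CoronaVert _ (wedgePartition hw hA₁ hA₂)) :
    c ∈ Set.range (wedgeCoronaLeft hw hA₁ hA₂) ∨ c ∈ Set.range (wedgeCoronaRight hw hA₁ hA₂) := by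
  rcases c with z | ⟨⟨z, S⟩, hS⟩
  · rcases hw.mem_range_or z with ⟨x, rfl⟩ | ⟨y, rfl⟩
    exacts [Or.inl ⟨Sum.inl x, rfl⟩, Or.inr ⟨Sum.inl y, rfl⟩]
  have hS' : S ∈ (wedgePartition hw hA₁ hA₂).part z := hS
  obtain ⟨x, A, hA, rfl, rfl⟩ | ⟨y, B, hB, rfl, rfl⟩ := hS'
  · exact Or.inl ⟨Sum.inr ⟨(x, A), hA⟩, rfl⟩
  · exact Or.inr ⟨Sum.inr ⟨(y, B), hB⟩, rfl⟩

lemma wedgeCorona_cross {c : CoronaVert T₁ P₁} {d : CoronaVert T₂ P₂}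
    (h : wedgeCoronaLeft hw hA₁ hA₂ c = wedgeCoronaRight hw hA₁ hA₂ d ∨
      (corona _ (wedgePartition hw hA₁ hA₂)).Adj
        (wedgeCoronaLeft hw hA₁ hA₂ c) (wedgeCoronaRight hw hA₁ hA₂ d)) :
    c = Sum.inl v₁ ∨ c = Sum.inr ⟨(v₁, A₁), hA₁⟩ ∨
      d = Sum.inl v₂ ∨ d = Sum.inr ⟨(v₂, A₂), hA₂⟩ := by
  rcases c with x | ⟨⟨x, A⟩, hA⟩ <;> rcases d with y | ⟨⟨y, B⟩, hB⟩ <;>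
    simp only [wedgeCoronaLeft_inl, wedgeCoronaLeft_inr, wedgeCoronaRight_inl,
      wedgeCoronaRight_inr, Sum.inl.injEq, Sum.inr.injEq, reduceCtorEq, corona_adj_inl_inl,
      corona_adj_inl_inr, corona_adj_inr_inl, corona_adj_inr_inr, false_or, or_false] at h
  · exact Or.inl (by rw [((hw.apply_eq_apply_iff x y).mp h).1])
  · exact Or.inl (by rw [((hw.apply_eq_apply_iff x y).mp h).1])
  · exact Or.inr (Or.inr (Or.inl (by rw [((hw.apply_eq_apply_iff x y).mp h.symm).2])))
  rcases h with h | ⟨hadj, hy, hx⟩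
  · have hfx : f₁ x = f₂ y := congrArg (·.1.1) h
    have hS : wedgePart f₁ f₂ v₁ A₁ A₂ x A = wedgePart f₂ f₁ v₂ A₂ A₁ y B := congrArg (·.1.2) h
    obtain ⟨rfl, rfl⟩ := (hw.apply_eq_apply_iff x y).mp hfx
    have hne : (wedgePart f₁ f₂ x A₁ A₂ x A ∩ wedgePart f₂ f₁ y A₂ A₁ y B).Nonempty := by
      rw [hS, Set.inter_self]
      exact ((P₂.nonempty y B hB).image f₂).mono image_subset_wedgePart
    obtain ⟨rfl, -⟩ := hw.eq_of_wedgePart_inter_wedgePart hA₁ hA₂ hA hB hne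
    exact Or.inr (Or.inl rfl)
  · rcases hw.eq_or_of_apply_mem_wedgePart hy with rfl | ⟨rfl, rfl⟩
    · rcases hw.symm.eq_or_of_apply_mem_wedgePart hx with rfl | ⟨-, rfl⟩
      exacts [absurd hw.apply_eq hadj.ne, Or.inr (Or.inr (Or.inr rfl))]
    · exact Or.inr (Or.inl rfl)

end WedgeCorona

section Amalgamation

variable {W X : Type*} {U : SimpleGraph W} {C : SimpleGraph X} {S₁ S₂ : Set W}

theorem nonempty_iso_of_cover (hcover : S₁ ∪ S₂ = Set.univ)
    (hedges : ∀ a b, U.Adj a b → (a ∈ S₁ ∧ b ∈ S₁) ∨ (a ∈ S₂ ∧ b ∈ S₂))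
    (e₁ : U.induce S₁ ↪g C) (e₂ : U.induce S₂ ↪g C)
    (hagree : ∀ w (h₁ : w ∈ S₁) (h₂ : w ∈ S₂), e₁ ⟨w, h₁⟩ = e₂ ⟨w, h₂⟩)
    (hsep : ∀ a b, (e₁ a = e₂ b ∨ C.Adj (e₁ a) (e₂ b)) → a.1 ∈ S₂ ∨ b.1 ∈ S₁)
    (hsurj : ∀ c, c ∈ Set.range e₁ ∨ c ∈ Set.range e₂) : Nonempty (U ≃g C) := by
  classical
  have hS₂ : ∀ w, w ∉ S₁ → w ∈ S₂ := fun w hw =>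
    ((hcover ▸ Set.mem_univ w : w ∈ S₁ ∪ S₂)).resolve_left hw
  let g : W → X := fun w => if h : w ∈ S₁ then e₁ ⟨w, h⟩ else e₂ ⟨w, hS₂ w h⟩
  have hg₁ : ∀ w (h : w ∈ S₁), g w = e₁ ⟨w, h⟩ := fun w h => dif_pos h
  have hg₂ : ∀ w (h : w ∈ S₂), g w = e₂ ⟨w, h⟩ := by
    intro w h
    by_cases h₁ : w ∈ S₁
    · exact (dif_pos h₁).trans (hagree w h₁ h)
    · exact dif_neg h₁
  have hside : ∀ a b, (g a = g b ∨ C.Adj (g a) (g b)) →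
      (a ∈ S₁ ∧ b ∈ S₁) ∨ (a ∈ S₂ ∧ b ∈ S₂) := by
    intro a b hab
    by_cases ha : a ∈ S₁ <;> by_cases hb : b ∈ S₁
    · exact Or.inl ⟨ha, hb⟩
    · rw [hg₁ a ha, hg₂ b (hS₂ b hb)] at hab
      exact Or.inr ⟨(hsep _ _ hab).resolve_right hb, hS₂ b hb⟩
    · rw [hg₂ a (hS₂ a ha), hg₁ b hb, eq_comm, C.adj_comm] at hab
      exact Or.inr ⟨hS₂ a ha, (hsep _ _ hab).resolve_right ha⟩
    · exact Or.inr ⟨hS₂ a ha, hS₂ b hb⟩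
  have hsame : ∀ a b, (a ∈ S₁ ∧ b ∈ S₁) ∨ (a ∈ S₂ ∧ b ∈ S₂) →
      (g a = g b ↔ a = b) ∧ (C.Adj (g a) (g b) ↔ U.Adj a b) := by
    rintro a b (⟨ha, hb⟩ | ⟨ha, hb⟩)
    · rw [hg₁ a ha, hg₁ b hb, e₁.injective.eq_iff, Subtype.mk.injEq]
      exact ⟨Iff.rfl, e₁.map_adj_iff⟩
    · rw [hg₂ a ha, hg₂ b hb, e₂.injective.eq_iff, Subtype.mk.injEq]
      exact ⟨Iff.rfl, e₂.map_adj_iff⟩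
  have hbij : g.Bijective := by
    refine ⟨fun a b hab => ((hsame a b (hside a b (Or.inl hab))).1).mp hab, fun c => ?_⟩
    rcases hsurj c with ⟨a, rfl⟩ | ⟨b, rfl⟩
    exacts [⟨a, hg₁ a a.2⟩, ⟨b, hg₂ b b.2⟩]
  refine ⟨⟨Equiv.ofBijective g hbij, fun {a b} => ⟨fun h => ?_, fun h => ?_⟩⟩⟩
  · exact (hsame a b (hside a b (Or.inr h))).2.mp h
  · exact (hsame a b (hedges a b h)).2.mpr h

end Amalgamation

theorem union_at_shared_edge_general {W : Type}
    (U : SimpleGraph W) (SG SH : Set W) (w0 w1 : W)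
    (hw0G : w0 ∈ SG) (hw0H : w0 ∈ SH) (hw1G : w1 ∈ SG) (hw1H : w1 ∈ SH)
    (hadj : U.Adj w0 w1)
    (hcover : SG ∪ SH = Set.univ) (hinter : SG ∩ SH = {w0, w1})
    (hedges : ∀ a b : W, U.Adj a b → (a ∈ SG ∧ b ∈ SG) ∨ (a ∈ SH ∧ b ∈ SH))
    (EG : Set ↥SG) (EH : Set ↥SH)
    (hG : IsGenCoronaWithExt (U.induce SG) EG)
    (hH : IsGenCoronaWithExt (U.induce SH) EH)
    (hmemG : (⟨w0, hw0G⟩ : ↥SG) ∈ EG) (hmemH : (⟨w0, hw0H⟩ : ↥SH) ∈ EH) :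
    IsGeneralCoronaOfTree U := by
  obtain ⟨n₁, T₁, P₁, hT₁, fG, rfl⟩ := hG
  obtain ⟨n₂, T₂, P₂, hT₂, fH, rfl⟩ := hH
  obtain ⟨v₁, A₁, hA₁, hv₁, hq₁⟩ := exists_eq_inl_inr_of_adj hmemG
    ((fG.map_adj_iff (v := ⟨w0, hw0G⟩) (w := ⟨w1, hw1G⟩)).mpr hadj)
  obtain ⟨v₂, A₂, hA₂, hv₂, hq₂⟩ := exists_eq_inl_inr_of_adj hmemH
    ((fH.map_adj_iff (v := ⟨w0, hw0H⟩) (w := ⟨w1, hw1H⟩)).mpr hadj)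
  obtain ⟨n, f₁, f₂, hw⟩ := exists_isWedge_fin v₁ v₂
  let L := wedgeCoronaLeft hw hA₁ hA₂
  let R := wedgeCoronaRight hw hA₁ hA₂
  refine ⟨n, _, wedgePartition hw hA₁ hA₂, hw.isTree_sup hT₁ hT₂,
    nonempty_iso_of_cover hcover hedges (L.comp fG.toEmbedding) (R.comp fH.toEmbedding)
      (fun w h₁ h₂ => ?_) (fun a b hab => ?_) (fun c => ?_)⟩
  · rcases (hinter.symm ▸ ⟨h₁, h₂⟩ : w ∈ ({w0, w1} : Set W)) with rfl | rfl
    · exact (congrArg L hv₁).trans ((wedgeCoronaLeft_inl_eq hw hA₁ hA₂).trans (congrArg R hv₂.symm))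
    · exact (congrArg L hq₁).trans ((wedgeCoronaLeft_inr_eq hw hA₁ hA₂).trans (congrArg R hq₂.symm))
  · rcases wedgeCorona_cross hw hA₁ hA₂ hab with h | h | h | h
    · exact Or.inl (by rw [fG.injective (h.trans hv₁.symm)]; exact hw0H)
    · exact Or.inl (by rw [fG.injective (h.trans hq₁.symm)]; exact hw1H)
    · exact Or.inr (by rw [fH.injective (h.trans hv₂.symm)]; exact hw0G)
    · exact Or.inr (by rw [fH.injective (h.trans hq₂.symm)]; exact hw1G)
  · rcases wedgeCorona_mem_range_or hw hA₁ hA₂ c with ⟨d, rfl⟩ | ⟨d, rfl⟩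
    · exact Or.inl ⟨fG.symm d, by simp [L]⟩
    · exact Or.inr ⟨fH.symm d, by simp [R]⟩

/-- If the graphs `G = U.induce SG` and `H = U.induce SH` are general coronas
of trees sharing exactly one edge `w0 w1` (and exactly its two endpoints, every edge of
the union `U` lying in `G` or in `H`), where the endpoint `w0` is external in each of `G`
and `H` and the endpoint `w1` is external in neither, then the union `U = G ∪ H` is a
general corona of a tree. -/
theorem union_at_shared_edge {W : Type} [Fintype W]
    (U : SimpleGraph W) (SG SH : Set W) (w0 w1 : W)
    (hw0G : w0 ∈ SG) (hw0H : w0 ∈ SH) (hw1G : w1 ∈ SG) (hw1H : w1 ∈ SH)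
    (hne : w0 ≠ w1) (hadj : U.Adj w0 w1)
    (hcover : SG ∪ SH = Set.univ) (hinter : SG ∩ SH = {w0, w1})
    (hedges : ∀ a b : W, U.Adj a b → (a ∈ SG ∧ b ∈ SG) ∨ (a ∈ SH ∧ b ∈ SH))
    (EG : Set ↥SG) (EH : Set ↥SH)
    (hG : IsGenCoronaWithExt (U.induce SG) EG)
    (hH : IsGenCoronaWithExt (U.induce SH) EH)
    (hmemG : (⟨w0, hw0G⟩ : ↥SG) ∈ EG) (hmemH : (⟨w0, hw0H⟩ : ↥SH) ∈ EH)
    (hnotG : (⟨w1, hw1G⟩ : ↥SG) ∉ EG) (hnotH : (⟨w1, hw1H⟩ : ↥SH) ∉ EH) :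
    IsGeneralCoronaOfTree U :=
  union_at_shared_edge_general U SG SH w0 w1 hw0G hw0H hw1G hw1H hadj hcover hinter hedges EG EH hG
    hH hmemG hmemH

end GenCorona
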